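/- (Theorem A.1: convergence of multiplicative weights for the canonical optimization task, stated for an arbitrary oracle-response sequence.) Let m ≥ 2, n ≥ 1 be integers, A ∈ ℝ^{m×n}, b ∈ ℝ^n, ε > 0, ρ > 0, and set β := ε/(2ρ²). Let T ≥ 1 be an integer with T ≥ 4·ε^{−2}·ρ²·ln m, and let x_1, …, x_T ∈ ℝ^n be any sequence. For t = 1, …, T, let S_t := ∑_{s<t} x_s (so S_1 = 0), define p_t ∈ ℝ^m by p_t(i) := exp(β·(A S_t)_i)/∑_{j=1}^m exp(β·(A S_t)_j), and let μ_t := ⟨p_t, A x_t⟩ + ⟨b, x_t⟩. Assume that ‖A x_t‖∞ ≤ ρ for every t. Then the average x_* := (1/T)·∑_{t=1}^T x_t satisfies max_i (A x_*)_i + ⟨b, x_*⟩ ≤ max_{t=1,…,T} μ_t + ε. -/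

import Mathlib

/-!
The potential `logSumExp (β • S)` of the running sum `S` of the loss vectors `A x_t` dominates
`β • max S` and starts at `log m`. The weights `p_t` are the softmax of `β • S_t`, so each round
multiplies the partition function by `∑ i, p_t i * exp (β * (A x_t) i)`; since `|(A x_t) i| ≤ ρ`,
Hoeffding's lemma bounds this factor by `exp (β ⟪p_t, A x_t⟫ + β² ρ² / 2)`. Telescoping over the
`T` rounds and dividing by `β T` gives
`max (A x_*) ≤ (1/T) ∑ ⟪p_t, A x_t⟫ + log m / (β T) + β ρ² / 2`, and the choice of `β` and `T`
makes the last two terms at most `ε / 2` and `ε / 4`. Adding `⟪b, x_*⟫` turns the average of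
`⟪p_t, A x_t⟫` into the average of the `μ_t`, which is at most their maximum.
-/

open Real MeasureTheory ProbabilityTheory Finset Matrix

theorem Fin.sum_filter_lt_eq_sum_range {M : Type*} [AddCommMonoid M] {T : ℕ} (f : ℕ → M)
    (t : Fin T) : ∑ s ∈ univ.filter (· < t), f s = ∑ k ∈ range t, f k := by
  rw [filter_gt_eq_Iio, ← Nat.Iio_eq_range, ← Fin.map_valEmbedding_Iio, sum_map]
  rfl

section LogSumExp

variable {ι : Type*} [Fintype ι]

noncomputable def logSumExp (y : ι → ℝ) : ℝ := log (∑ i, exp (y i))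

noncomputable def softmax (y : ι → ℝ) : ι → ℝ := fun i => exp (y i) / ∑ j, exp (y j)

theorem sum_exp_pos [Nonempty ι] (y : ι → ℝ) : 0 < ∑ i, exp (y i) :=
  sum_pos (fun _ _ => exp_pos _) univ_nonempty

theorem softmax_pos (y : ι → ℝ) (i : ι) : 0 < softmax y i :=
  have : Nonempty ι := ⟨i⟩
  div_pos (exp_pos _) (sum_exp_pos y)

theorem sum_softmax [Nonempty ι] (y : ι → ℝ) : ∑ i, softmax y i = 1 := by
  simp only [softmax]
  rw [← sum_div, div_self (sum_exp_pos y).ne']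

theorem le_logSumExp (y : ι → ℝ) (i : ι) : y i ≤ logSumExp y := by
  have : Nonempty ι := ⟨i⟩
  rw [logSumExp, le_log_iff_exp_le (sum_exp_pos y)]
  exact single_le_sum (fun j _ => (exp_pos _).le) (mem_univ i)

theorem logSumExp_zero : logSumExp (0 : ι → ℝ) = log (Fintype.card ι) := by
  simp [logSumExp]

theorem sum_mul_exp_le_exp_of_mem_Icc {p z : ι → ℝ} (hp0 : ∀ i, 0 ≤ p i) (hp1 : ∑ i, p i = 1)
    {a b : ℝ} (hz : ∀ i, z i ∈ Set.Icc a b) (t : ℝ) :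
    ∑ i, p i * exp (t * z i) ≤ exp (t * (p ⬝ᵥ z) + t ^ 2 * (b - a) ^ 2 / 8) := by
  -- Hoeffding's lemma for the probability measure with weights `p`
  let _ : MeasurableSpace ι := ⊤
  set μ : Measure ι := ∑ i, ENNReal.ofReal (p i) • Measure.dirac i
  have hμ : ∀ f : ι → ℝ, ∫ j, f j ∂μ = ∑ i, p i * f i := by
    intro f
    rw [integral_finsetSum_measure
      (fun i _ => (integrable_dirac enorm_lt_top).smul_measure ENNReal.ofReal_ne_top)]
    simp [integral_smul_measure, hp0]
  have : IsProbabilityMeasure μ :=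
    ⟨by simp [μ, ← ENNReal.ofReal_sum_of_nonneg (fun i _ => hp0 i), hp1]⟩
  have hoeffding := (hasSubgaussianMGF_of_mem_Icc (X := z) (μ := μ)
    (measurable_of_countable z).aemeasurable (ae_of_all _ hz)).mgf_le t
  have hc : ((‖b - a‖₊ / 2) ^ 2 : NNReal) * t ^ 2 / 2 = t ^ 2 * (b - a) ^ 2 / 8 := by
    simp only [NNReal.coe_pow, NNReal.coe_div, coe_nnnorm, Real.norm_eq_abs, NNReal.coe_ofNat]
    rw [div_pow, sq_abs]; ring
  simp only [mgf, hμ, hc] at hoeffding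
  calc ∑ i, p i * exp (t * z i)
      = exp (t * (p ⬝ᵥ z)) * ∑ i, p i * exp (t * (z i - p ⬝ᵥ z)) := by
        rw [mul_sum]; congr 1 with i
        rw [mul_left_comm, ← exp_add]; ring_nf
    _ ≤ exp (t * (p ⬝ᵥ z)) * exp (t ^ 2 * (b - a) ^ 2 / 8) := by gcongr; exact hoeffding
    _ = _ := (exp_add _ _).symm

theorem logSumExp_add_smul_le [Nonempty ι] (y : ι → ℝ) {z : ι → ℝ} {a b : ℝ}
    (hz : ∀ i, z i ∈ Set.Icc a b) (β : ℝ) :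
    logSumExp (y + β • z) ≤ logSumExp y + (β * (softmax y ⬝ᵥ z) + β ^ 2 * (b - a) ^ 2 / 8) := by
  have hsplit : ∑ i, exp ((y + β • z) i) = (∑ j, exp (y j)) * ∑ i, softmax y i * exp (β * z i) := by
    rw [mul_sum]; congr 1 with i
    rw [softmax, ← mul_assoc, mul_div_cancel₀ _ (sum_exp_pos y).ne', Pi.add_apply, Pi.smul_apply,
      smul_eq_mul, exp_add]
  have hpos : 0 < ∑ i, softmax y i * exp (β * z i) :=
    sum_pos (fun i _ => mul_pos (softmax_pos y i) (exp_pos _)) univ_nonempty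
  rw [logSumExp, logSumExp, hsplit, log_mul (sum_exp_pos y).ne' hpos.ne']
  gcongr
  rw [log_le_iff_le_exp hpos]
  exact sum_mul_exp_le_exp_of_mem_Icc (fun i => (softmax_pos y i).le) (sum_softmax y) hz β

theorem logSumExp_smul_sum_range_le [Nonempty ι] (z : ℕ → ι → ℝ) {a b : ℝ} {T : ℕ}
    (hz : ∀ t < T, ∀ i, z t i ∈ Set.Icc a b) (β : ℝ) :
    logSumExp (β • ∑ t ∈ range T, z t) ≤ log (Fintype.card ι) +
      ∑ t ∈ range T, (β * (softmax (β • ∑ s ∈ range t, z s) ⬝ᵥ z t) + β ^ 2 * (b - a) ^ 2 / 8) := by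
  set Φ : ℕ → ℝ := fun k => logSumExp (β • ∑ s ∈ range k, z s)
  have hstep : ∀ t ∈ range T, Φ (t + 1) - Φ t ≤
      β * (softmax (β • ∑ s ∈ range t, z s) ⬝ᵥ z t) + β ^ 2 * (b - a) ^ 2 / 8 := by
    intro t ht
    have := logSumExp_add_smul_le (β • ∑ s ∈ range t, z s) (hz t (mem_range.mp ht)) β
    simp only [Φ, sum_range_succ, smul_add]
    linarith
  have htelescope := sum_le_sum hstep
  rw [sum_range_sub] at htelescope
  simp only [Φ, range_zero, sum_empty, smul_zero, logSumExp_zero] at htelescope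
  linarith

theorem mul_sum_apply_le_log_card_add_sum_softmax {T : ℕ} (z : Fin T → ι → ℝ) {a b : ℝ}
    (hz : ∀ t i, z t i ∈ Set.Icc a b) (β : ℝ) (i : ι) :
    β * ∑ t, z t i ≤ log (Fintype.card ι) + ∑ t,
      (β * (softmax (β • ∑ s ∈ univ.filter (· < t), z s) ⬝ᵥ z t) + β ^ 2 * (b - a) ^ 2 / 8) := by
  have : Nonempty ι := ⟨i⟩
  let zN : ℕ → ι → ℝ := fun k => if h : k < T then z ⟨k, h⟩ else 0
  have hzN : ∀ t : Fin T, zN t = z t := fun t => dif_pos t.isLt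
  have hpartial : ∀ t : Fin T, ∑ s ∈ univ.filter (· < t), z s = ∑ k ∈ range t, zN k := by
    intro t
    simp only [← hzN, Fin.sum_filter_lt_eq_sum_range]
  have hzN_mem : ∀ k < T, ∀ i, zN k i ∈ Set.Icc a b := fun k hk => by
    simpa only [zN, dif_pos hk] using hz ⟨k, hk⟩
  calc β * ∑ t, z t i = (β • ∑ k ∈ range T, zN k) i := by
        simp [← Fin.sum_univ_eq_sum_range, hzN]
    _ ≤ logSumExp (β • ∑ k ∈ range T, zN k) := le_logSumExp _ i
    _ ≤ _ := logSumExp_smul_sum_range_le zN hzN_mem β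
    _ = _ := by
        rw [← Fin.sum_univ_eq_sum_range
          (fun t => β * (softmax (β • ∑ s ∈ range t, zN s) ⬝ᵥ zN t) + β ^ 2 * (b - a) ^ 2 / 8)]
        simp only [hpartial, hzN]

theorem inv_mul_sum_apply_le_inv_mul_sum_softmax_add {T : ℕ} (hT0 : 0 < T) (z : Fin T → ι → ℝ)
    {ε ρ : ℝ} (hε : 0 < ε) (hρ : 0 < ρ) (hz : ∀ t i, z t i ∈ Set.Icc (-ρ) ρ)
    (hT : 4 * ε⁻¹ ^ 2 * ρ ^ 2 * log (Fintype.card ι) ≤ T) (i : ι) :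
    (T : ℝ)⁻¹ * ∑ t, z t i ≤
      (T : ℝ)⁻¹ * ∑ t, softmax ((ε / (2 * ρ ^ 2)) • ∑ s ∈ univ.filter (· < t), z s) ⬝ᵥ z t + ε := by
  set β := ε / (2 * ρ ^ 2) with hβ
  have hTpos : (0 : ℝ) < T := by exact_mod_cast hT0
  have hregret := mul_sum_apply_le_log_card_add_sum_softmax z hz β i
  simp only [sum_add_distrib, ← mul_sum, sum_const, card_univ, Fintype.card_fin,
    nsmul_eq_mul] at hregret
  have hlog : log (Fintype.card ι) ≤ T * ε ^ 2 / (4 * ρ ^ 2) := by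
    rw [le_div_iff₀ (by positivity)]
    have := mul_le_mul_of_nonneg_left hT (sq_nonneg ε)
    field_simp at this
    linarith
  have hoverhead : log (Fintype.card ι) + T * (β ^ 2 * (ρ - -ρ) ^ 2 / 8) ≤ β * (T * ε) := by
    calc log (Fintype.card ι) + T * (β ^ 2 * (ρ - -ρ) ^ 2 / 8)
        = log (Fintype.card ι) + T * ε ^ 2 / (8 * ρ ^ 2) := by
          rw [hβ]; field_simp; ring
      _ ≤ T * ε ^ 2 / (4 * ρ ^ 2) + T * ε ^ 2 / (8 * ρ ^ 2) := by gcongr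
      _ ≤ β * (T * ε) := by
          rw [hβ]; field_simp; nlinarith [sq_nonneg ε]
  have hsum : ∑ t, z t i ≤ ∑ t, softmax (β • ∑ s ∈ univ.filter (· < t), z s) ⬝ᵥ z t + T * ε :=
    le_of_mul_le_mul_left (by linarith) (show 0 < β by positivity)
  calc (T : ℝ)⁻¹ * ∑ t, z t i
      ≤ (T : ℝ)⁻¹ * (∑ t, softmax (β • ∑ s ∈ univ.filter (· < t), z s) ⬝ᵥ z t + T * ε) := by
        gcongr
    _ = _ := by field_simp

end LogSumExp

/-- Theorem A.1: convergence of multiplicative weights for the canonical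
optimization task, stated for an arbitrary oracle-response sequence.
The norm on `Fin m → ℝ` is the sup (ℓ∞) norm. -/
theorem mw_canonical_convergence (m n : ℕ) (hm : 2 ≤ m)
    (A : Matrix (Fin m) (Fin n) ℝ) (b : Fin n → ℝ)
    (ε ρ : ℝ) (hε : 0 < ε) (hρ : 0 < ρ)
    (β : ℝ) (hβ : β = ε / (2 * ρ ^ 2))
    (T : ℕ) (hT1 : 1 ≤ T) (hT : 4 * ε⁻¹ ^ 2 * ρ ^ 2 * Real.log m ≤ (T : ℝ))
    (x : Fin T → Fin n → ℝ)
    (S : Fin T → Fin n → ℝ)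
    (hS : ∀ t, S t = ∑ s ∈ Finset.univ.filter (fun s => s < t), x s)
    (p : Fin T → Fin m → ℝ)
    (hp : ∀ t i, p t i =
      Real.exp (β * A.mulVec (S t) i) / ∑ j, Real.exp (β * A.mulVec (S t) j))
    (μ : Fin T → ℝ)
    (hμ : ∀ t, μ t = (∑ i, p t i * A.mulVec (x t) i) + ∑ i, b i * x t i)
    (hwidth : ∀ t, ‖A.mulVec (x t)‖ ≤ ρ)
    (xstar : Fin n → ℝ) (hxstar : xstar = (T : ℝ)⁻¹ • ∑ t, x t) :
    (Finset.univ.sup' (Finset.univ_nonempty_iff.mpr ⟨⟨0, by omega⟩⟩)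
        fun i => A.mulVec xstar i) + (∑ i, b i * xstar i) ≤
      (Finset.univ.sup' (Finset.univ_nonempty_iff.mpr ⟨⟨0, hT1⟩⟩) μ) + ε := by
  have hAx : ∀ t i, (A *ᵥ x t) i ∈ Set.Icc (-ρ) ρ := fun t i =>
    abs_le.mp ((norm_le_pi_norm (A *ᵥ x t) i).trans (hwidth t))
  have hsoftmax : ∀ t, p t = softmax (β • ∑ s ∈ univ.filter (· < t), A *ᵥ x s) := by
    intro t; ext i; rw [hp, ← mulVec_sum, ← hS]; rfl
  have hAxstar : ∀ i, (A *ᵥ xstar) i = (T : ℝ)⁻¹ * ∑ t, (A *ᵥ x t) i := by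
    intro i; rw [hxstar, mulVec_smul, mulVec_sum, Pi.smul_apply, Finset.sum_apply, smul_eq_mul]
  have hmax : univ.sup' (univ_nonempty_iff.mpr ⟨⟨0, by omega⟩⟩) (fun i => (A *ᵥ xstar) i) ≤
      (T : ℝ)⁻¹ * ∑ t, p t ⬝ᵥ A *ᵥ x t + ε := by
    refine sup'_le _ _ fun i _ => ?_
    rw [hAxstar, funext hsoftmax, hβ]
    exact inv_mul_sum_apply_le_inv_mul_sum_softmax_add hT1 _ hε hρ hAx (by simpa using hT) i
  have havg : (T : ℝ)⁻¹ * ∑ t, p t ⬝ᵥ A *ᵥ x t + b ⬝ᵥ xstar = (T : ℝ)⁻¹ * ∑ t, μ t := by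
    rw [hxstar, dotProduct_smul, dotProduct_sum, smul_eq_mul, ← mul_add, ← sum_add_distrib]
    simp only [hμ]
    rfl
  have hμ_le : (T : ℝ)⁻¹ * ∑ t, μ t ≤ univ.sup' (univ_nonempty_iff.mpr ⟨⟨0, hT1⟩⟩) μ := by
    rw [inv_mul_le_iff₀ (by exact_mod_cast hT1)]
    simpa using sum_le_card_nsmul univ μ _ (fun t _ => le_sup' μ (mem_univ t))
  change _ + b ⬝ᵥ xstar ≤ _
  linarith
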